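/- arXiv:1903.00456 — 2 statements merged into one kernel-verified Lean document; each statement's English description precedes it below -/
import Mathlib

section
/- If X is positive semidefinite with all diagonal entries nonzero and Y is positive definite, then the Hadamard product X ∘ Y is positive definite. -/
/-!
Since `Y` is positive definite, `Y - r • 1` is positive semidefinite for some `r > 0` (take `r`
the least eigenvalue). Then `X ∘ Y = X ∘ (Y - r • 1) + r • diagonal X.diag`, where the first
summand is positive semidefinite by the Schur product theorem and the second is positive
definite, because the diagonal of a positive semidefinite matrix is nonnegative.
-/

open Matrix ComplexOrder

namespace Matrix

variable {ι 𝕜 : Type*} [Fintype ι] [DecidableEq ι] [RCLike 𝕜]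

theorem PosDef.exists_pos_posSemidef_sub_smul_one {Y : Matrix ι ι 𝕜} (hY : Y.PosDef) :
    ∃ r : ℝ, 0 < r ∧ (Y - r • 1).PosSemidef := by
  rcases isEmpty_or_nonempty ι
  · exact ⟨1, one_pos, by simpa only [Subsingleton.elim (Y - _) 0] using PosSemidef.zero⟩
  open scoped MatrixOrder in
  obtain ⟨r, hr, hrY⟩ := (CFC.exists_pos_algebraMap_le_iff hY.isHermitian.isSelfAdjoint).2
    fun x hx => hY.isStrictlyPositive.spectrum_pos hx
  exact ⟨r, hr, by rwa [Algebra.algebraMap_eq_smul_one] at hrY⟩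

theorem PosSemidef.hadamard_posDef {X Y : Matrix ι ι 𝕜} (hX : X.PosSemidef)
    (hXdiag : ∀ i, X i i ≠ 0) (hY : Y.PosDef) : (X ⊙ Y).PosDef := by
  obtain ⟨r, hr, hYr⟩ := hY.exists_pos_posSemidef_sub_smul_one
  have hdiag : (diagonal X.diag).PosDef :=
    posDef_diagonal_iff.2 fun i => hX.diag_nonneg.lt_of_ne' (hXdiag i)
  rw [← sub_add_cancel Y (r • 1), hadamard_add, hadamard_smul, hadamard_one]
  exact PosDef.posSemidef_add (hX.hadamard hYr) (hdiag.smul hr)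

end Matrix

/-- If `X` is positive semidefinite with all diagonal entries nonzero and `Y` is
positive definite, then the Hadamard product `X ∘ Y` is positive definite. -/
theorem hadamard_posDef_of_posSemidef_diag_ne_zero {n : ℕ}
    (X Y : Matrix (Fin n) (Fin n) ℂ)
    (hX : X.PosSemidef) (hXdiag : ∀ i, X i i ≠ 0) (hY : Y.PosDef) :
    (X.hadamard Y).PosDef :=
  hX.hadamard_posDef hXdiag hY
end

section
/- Let V ∈ ℂ^{n×n} be invertible with V A = D V for a diagonal matrix D = diag(λ_1,…,λ_n). For σ : ℕ → {0,1} and t ∈ ℕ, let W_{σ(t)} = Σ_{i=0}^{t} σ(t−i) A^i B B* (A*)^i. Then V W_{σ(t)} V* = (V B B* V*) ∘ (Λ_{σ(t)} Λ_{σ(t)}*), where Λ_{σ(t)} is the n×(t+1) matrix with entries (Λ_{σ(t)})_{k,j} = σ(t−j) λ_k^j for j = 0,…,t, and ∘ denotes the Hadamard product. -/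
open Matrix ComplexOrder

/-!
Write `G = V B B* V*` and `D = diag(λ)`. From `V A = D V` we get `V A^i = D^i V`, so each
conjugated Gramian term is `V A^i B B* (A*)^i V* = D^i G (D^i)* = G ∘ (λ^i (λ^i)*)`.
On the other side `Λ Λ*` is the sum over its columns, `Σ_j σ(t-j)² λ^j (λ^j)*`, and `σ² = σ`
because `σ` is `{0,1}`-valued; the Hadamard product is linear, so the two sums agree termwise.
-/

namespace Matrix

variable {l m n p α : Type*}

theorem hadamard_sum [NonUnitalNonAssocSemiring α] {ι : Type*} (s : Finset ι) (A : Matrix m n α)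
    (B : ι → Matrix m n α) : A ⊙ ∑ i ∈ s, B i = ∑ i ∈ s, A ⊙ B i := by
  ext i j
  simp only [hadamard_apply, sum_apply, Finset.mul_sum]

theorem hadamard_vecMulVec [CommSemiring α] [Fintype m] [Fintype n] [DecidableEq m]
    [DecidableEq n] (M : Matrix m n α) (d : m → α) (e : n → α) :
    M ⊙ vecMulVec d e = diagonal d * M * diagonal e := by
  ext i j
  simp only [hadamard_apply, vecMulVec_apply, mul_diagonal, diagonal_mul]
  ring

theorem mul_eq_sum_vecMulVec [NonUnitalNonAssocSemiring α] [Fintype m] (M : Matrix l m α)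
    (N : Matrix m n α) : M * N = ∑ j, vecMulVec (fun i => M i j) (N j) := by
  ext i k
  simp only [mul_apply, sum_apply, vecMulVec_apply]

theorem mul_conjTranspose_eq_sum_smul_vecMulVec [CommSemiring α] [StarRing α] [Fintype p]
    (Λ : Matrix m p α) (c : p → α) (u : p → m → α) (hΛ : ∀ k j, Λ k j = c j * u j k) :
    Λ * Λᴴ = ∑ j, (c j * star (c j)) • vecMulVec (u j) (star (u j)) := by
  rw [mul_eq_sum_vecMulVec]
  refine Finset.sum_congr rfl fun j _ => ?_
  ext k l
  simp only [conjTranspose_apply, hΛ, vecMulVec_apply, smul_apply, smul_eq_mul, star_mul',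
    Pi.star_apply]
  ring

theorem mul_pow_gram_mul_conjTranspose_eq_hadamard [CommSemiring α] [StarRing α] [Fintype n]
    [DecidableEq n] [Fintype p] {A V : Matrix n n α} {d : n → α}
    (hVA : V * A = diagonal d * V) (B : Matrix n p α) (i : ℕ) :
    V * (A ^ i * B * Bᴴ * Aᴴ ^ i) * Vᴴ = (V * B * Bᴴ * Vᴴ) ⊙ vecMulVec (d ^ i) (star (d ^ i)) := by
  have hpow : V * A ^ i = diagonal (d ^ i) * V := by
    rw [← diagonal_pow]; exact SemiconjBy.pow_right hVA i
  calc V * (A ^ i * B * Bᴴ * Aᴴ ^ i) * Vᴴ = (V * A ^ i) * (B * Bᴴ) * (V * A ^ i)ᴴ := by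
        simp only [conjTranspose_mul, conjTranspose_pow, Matrix.mul_assoc]
    _ = _ := by
        rw [hpow, hadamard_vecMulVec, conjTranspose_mul, diagonal_conjTranspose]
        simp only [Matrix.mul_assoc]

end Matrix

theorem gramian_hadamard_decomposition_general {n m : ℕ}
    (A V : Matrix (Fin n) (Fin n) ℂ) (B : Matrix (Fin n) (Fin m) ℂ)
    (lam : Fin n → ℂ)
    (hVA : V * A = Matrix.diagonal lam * V)
    (σ : ℕ → ℝ) (hσ : ∀ i, σ i = 0 ∨ σ i = 1) (t : ℕ) :
    V * (∑ i ∈ Finset.range (t + 1),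
        (σ (t - i) : ℂ) • (A ^ i * B * Bᴴ * Aᴴ ^ i)) * Vᴴ =
      (V * B * Bᴴ * Vᴴ).hadamard
        ((Matrix.of fun (k : Fin n) (j : Fin (t + 1)) =>
            (σ (t - (j : ℕ)) : ℂ) * lam k ^ (j : ℕ)) *
          (Matrix.of fun (k : Fin n) (j : Fin (t + 1)) =>
            (σ (t - (j : ℕ)) : ℂ) * lam k ^ (j : ℕ))ᴴ) := by
  have hσ_idem : ∀ i, (σ i : ℂ) * star (σ i : ℂ) = σ i := fun i => by
    rcases hσ i with h | h <;> simp [h]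
  set Λ : Matrix (Fin n) (Fin (t + 1)) ℂ :=
    of fun k j => (σ (t - (j : ℕ)) : ℂ) * lam k ^ (j : ℕ)
  rw [mul_conjTranspose_eq_sum_smul_vecMulVec Λ (fun j => (σ (t - j) : ℂ)) (fun j => lam ^ (j : ℕ))
      fun k j => rfl]
  simp only [hσ_idem]
  rw [Fin.sum_univ_eq_sum_range (fun j => (σ (t - j) : ℂ) • vecMulVec (lam ^ j) (star (lam ^ j))),
    hadamard_sum, Finset.mul_sum, Finset.sum_mul]
  refine Finset.sum_congr rfl fun i _ => ?_
  rw [Matrix.mul_smul, Matrix.smul_mul, hadamard_smul, mul_pow_gram_mul_conjTranspose_eq_hadamard hVA]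

/-- Hadamard decomposition of the σ-weighted controllability Gramian: if `V A = D V`
with `D = diag(λ)` and `V` invertible, then
`V W_{σ(t)} V* = (V B B* V*) ∘ (Λ_{σ(t)} Λ_{σ(t)}*)` where
`(Λ_{σ(t)})_{k,j} = σ(t−j) λ_k^j`. -/
theorem gramian_hadamard_decomposition {n m : ℕ}
    (A V : Matrix (Fin n) (Fin n) ℂ) (B : Matrix (Fin n) (Fin m) ℂ)
    (lam : Fin n → ℂ) (hV : IsUnit V)
    (hVA : V * A = Matrix.diagonal lam * V)
    (σ : ℕ → ℝ) (hσ : ∀ i, σ i = 0 ∨ σ i = 1) (t : ℕ) :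
    V * (∑ i ∈ Finset.range (t + 1),
        (σ (t - i) : ℂ) • (A ^ i * B * Bᴴ * Aᴴ ^ i)) * Vᴴ =
      (V * B * Bᴴ * Vᴴ).hadamard
        ((Matrix.of fun (k : Fin n) (j : Fin (t + 1)) =>
            (σ (t - (j : ℕ)) : ℂ) * lam k ^ (j : ℕ)) *
          (Matrix.of fun (k : Fin n) (j : Fin (t + 1)) =>
            (σ (t - (j : ℕ)) : ℂ) * lam k ^ (j : ℕ))ᴴ) :=
  gramian_hadamard_decomposition_general A V B lam hVA σ hσ t
end
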